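/- arXiv:2502.11415 — 2 statements merged into one kernel-verified Lean document; each statement's English description precedes it below -/
import Mathlib

section
/- (Theorem 3.) Suppose J(0, u) ≥ 0 for every control u, and let ε > 0. Then the perturbed Riccati recursion P^ε_N = H, P^ε_t = Q_t + A_t′P^ε_{t+1}A_t − (A_t′P^ε_{t+1}B_t + S_t′)(R_t + B_t′P^ε_{t+1}B_t + εI)^{−1}(B_t′P^ε_{t+1}A_t + S_t) is well defined, with R_t + B_t′P^ε_{t+1}B_t + εI ⪰ εI (hence invertible) for all t ∈ {0,…,N−1}. Moreover, with K^ε_t = −(R_t + B_t′P^ε_{t+1}B_t + εI)^{−1}(B_t′P^ε_{t+1}A_t + S_t), the pair (K^ε, 0) is a closed-loop optimal solution of Problem (LQ)_ε, and for each x₀ the control u^ε_t = K^ε_t x^ε_t (where x^ε₀ = x₀, x^ε_{t+1} = (A_t + B_t K^ε_t)x^ε_t) is the unique open-loop optimal control of Problem (LQ)_ε for x₀. -/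
/-!
Completing the square with the Riccati matrices `Pₜ` turns the perturbed cost into
`J_ε(x₀, u) = x₀′P₀x₀ + Σₜ (uₜ − Kₜxₜ)′Wₜ(uₜ − Kₜxₜ)` with `Wₜ = Rₜ + Bₜ′Pₜ₊₁Bₜ + εI`, as long as
the `Wₜ` are invertible. Positivity `Rₜ + Bₜ′Pₜ₊₁Bₜ ⪰ 0` comes by backward induction: along the
control that vanishes before `t`, equals `w` at `t` and follows the feedback afterwards, the
perturbed cost from `x₀ = 0` is `w′(Rₜ + Bₜ′Pₜ₊₁Bₜ)w + ε|w|²`, while `J(0, ·) ≥ 0` bounds it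
below by `ε|w|²`. Hence every `Wₜ` is positive definite, the sum of defects is nonnegative and
vanishes exactly on the closed-loop control, which gives optimality and uniqueness.
-/

open Matrix Finset

noncomputable section

/-- State trajectory of the discrete-time linear system `x_{t+1} = A_t x_t + B_t u_t`. -/
def lqState {n m : ℕ} (A : ℕ → Matrix (Fin n) (Fin n) ℝ) (B : ℕ → Matrix (Fin n) (Fin m) ℝ)
    (x₀ : Fin n → ℝ) (u : ℕ → Fin m → ℝ) : ℕ → Fin n → ℝ
  | 0 => x₀
  | t + 1 => A t *ᵥ lqState A B x₀ u t + B t *ᵥ u t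

/-- Quadratic cost `J(x₀, u)`. -/
def lqCost {n m : ℕ} (N : ℕ) (A : ℕ → Matrix (Fin n) (Fin n) ℝ)
    (B : ℕ → Matrix (Fin n) (Fin m) ℝ) (Q : ℕ → Matrix (Fin n) (Fin n) ℝ)
    (R : ℕ → Matrix (Fin m) (Fin m) ℝ) (S : ℕ → Matrix (Fin m) (Fin n) ℝ)
    (H : Matrix (Fin n) (Fin n) ℝ) (x₀ : Fin n → ℝ) (u : ℕ → Fin m → ℝ) : ℝ :=
  (∑ t ∈ range N,
      (lqState A B x₀ u t ⬝ᵥ Q t *ᵥ lqState A B x₀ u t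
        + 2 * (u t ⬝ᵥ S t *ᵥ lqState A B x₀ u t)
        + u t ⬝ᵥ R t *ᵥ u t))
    + lqState A B x₀ u N ⬝ᵥ H *ᵥ lqState A B x₀ u N

/-- Closed-loop state `x_{t+1} = (A_t + B_t K_t) x_t + B_t v_t`. -/
def clState {n m : ℕ} (A : ℕ → Matrix (Fin n) (Fin n) ℝ) (B : ℕ → Matrix (Fin n) (Fin m) ℝ)
    (K : ℕ → Matrix (Fin m) (Fin n) ℝ) (v : ℕ → Fin m → ℝ) (x₀ : Fin n → ℝ) :
    ℕ → Fin n → ℝ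
  | 0 => x₀
  | t + 1 => (A t + B t * K t) *ᵥ clState A B K v x₀ t + B t *ᵥ v t

/-- Outcome control `u_t = K_t x_t + v_t` of a closed-loop pair. -/
def clControl {n m : ℕ} (A : ℕ → Matrix (Fin n) (Fin n) ℝ) (B : ℕ → Matrix (Fin n) (Fin m) ℝ)
    (K : ℕ → Matrix (Fin m) (Fin n) ℝ) (v : ℕ → Fin m → ℝ) (x₀ : Fin n → ℝ) (t : ℕ) :
    Fin m → ℝ :=
  K t *ᵥ clState A B K v x₀ t + v t


/-- Perturbed cost `J_ε(x₀,u) = J(x₀,u) + ε Σ|u_t|²`. -/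
def lqCostPert {n m : ℕ} (N : ℕ) (A : ℕ → Matrix (Fin n) (Fin n) ℝ)
    (B : ℕ → Matrix (Fin n) (Fin m) ℝ) (Q : ℕ → Matrix (Fin n) (Fin n) ℝ)
    (R : ℕ → Matrix (Fin m) (Fin m) ℝ) (S : ℕ → Matrix (Fin m) (Fin n) ℝ)
    (H : Matrix (Fin n) (Fin n) ℝ) (ε : ℝ) (x₀ : Fin n → ℝ) (u : ℕ → Fin m → ℝ) : ℝ :=
  lqCost N A B Q R S H x₀ u + ε * ∑ t ∈ range N, u t ⬝ᵥ u t
section RiccatiStep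

variable {ι κ : Type*}

lemma isSymm_transpose_mul_mul [Fintype ι] {P : Matrix ι ι ℝ} (hP : P.IsSymm) (C : Matrix ι κ ℝ) :
    (Cᵀ * P * C).IsSymm := by
  simp [IsSymm, transpose_mul, hP.eq, Matrix.mul_assoc]

variable [Fintype ι] [Fintype κ]

lemma dotProduct_mulVec_comm_of_isSymm {M : Matrix κ κ ℝ} (hM : M.IsSymm) (u v : κ → ℝ) :
    u ⬝ᵥ M *ᵥ v = v ⬝ᵥ M *ᵥ u := by
  rw [dotProduct_mulVec, ← mulVec_transpose, hM.eq, dotProduct_comm]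

lemma mulVec_dotProduct_mulVec_mulVec {ι' : Type*} [Fintype ι'] (C : Matrix ι κ ℝ)
    (P : Matrix ι ι ℝ) (D : Matrix ι ι' ℝ) (a : κ → ℝ) (b : ι' → ℝ) :
    (C *ᵥ a) ⬝ᵥ P *ᵥ (D *ᵥ b) = a ⬝ᵥ (Cᵀ * P * D) *ᵥ b := by
  rw [← mulVec_mulVec, ← mulVec_mulVec, dotProduct_mulVec a, vecMul_transpose]

lemma dotProduct_self_nonneg (v : κ → ℝ) : 0 ≤ v ⬝ᵥ v := by
  simpa using dotProduct_star_self_nonneg v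

variable [DecidableEq κ]

lemma dotProduct_add_smul_one_mulVec (G : Matrix κ κ ℝ) (ε : ℝ) (u : κ → ℝ) :
    u ⬝ᵥ (G + ε • 1) *ᵥ u = u ⬝ᵥ G *ᵥ u + ε * (u ⬝ᵥ u) := by
  rw [add_mulVec, smul_mulVec, one_mulVec, dotProduct_add, dotProduct_smul, smul_eq_mul]

/-- Completing the square in `u`. -/
lemma dotProduct_mulVec_add_two_mul_eq {M : Matrix κ κ ℝ} (hM : M.IsSymm) (hU : IsUnit M)
    (L : Matrix κ ι ℝ) (x : ι → ℝ) (u : κ → ℝ) :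
    u ⬝ᵥ M *ᵥ u + 2 * (u ⬝ᵥ L *ᵥ x)
      = (u + (M⁻¹ * L) *ᵥ x) ⬝ᵥ M *ᵥ (u + (M⁻¹ * L) *ᵥ x) - x ⬝ᵥ (Lᵀ * M⁻¹ * L) *ᵥ x := by
  set v := (M⁻¹ * L) *ᵥ x
  have hMv : M *ᵥ v = L *ᵥ x := by
    rw [mulVec_mulVec, ← Matrix.mul_assoc, mul_nonsing_inv _ ((isUnit_iff_isUnit_det M).mp hU),
      Matrix.one_mul]
  have hLx : x ⬝ᵥ (Lᵀ * M⁻¹ * L) *ᵥ x = (L *ᵥ x) ⬝ᵥ v := by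
    rw [← mulVec_dotProduct_mulVec_mulVec, mulVec_mulVec]
  rw [hLx, mulVec_add, dotProduct_add, add_dotProduct, add_dotProduct,
    dotProduct_mulVec_comm_of_isSymm hM v u, hMv, dotProduct_comm (L *ᵥ x)]
  ring

variable (A : Matrix ι ι ℝ) (B : Matrix ι κ ℝ) (Q : Matrix ι ι ℝ) (R : Matrix κ κ ℝ)
  (S : Matrix κ ι ℝ) (ε : ℝ) (P : Matrix ι ι ℝ)

def riccatiWeight : Matrix κ κ ℝ := R + Bᵀ * P * B + ε • 1

def riccatiStep : Matrix ι ι ℝ :=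
  Q + Aᵀ * P * A - (Aᵀ * P * B + Sᵀ) * (riccatiWeight B R ε P)⁻¹ * (Bᵀ * P * A + S)

def riccatiGain : Matrix κ ι ℝ := -((riccatiWeight B R ε P)⁻¹ * (Bᵀ * P * A + S))

def stageCost (x : ι → ℝ) (u : κ → ℝ) : ℝ :=
  x ⬝ᵥ Q *ᵥ x + 2 * (u ⬝ᵥ S *ᵥ x) + u ⬝ᵥ R *ᵥ u + ε * (u ⬝ᵥ u)

variable {A B Q R S ε P}

omit [Fintype κ] in
lemma isSymm_riccatiWeight (hR : R.IsSymm) (hP : P.IsSymm) : (riccatiWeight B R ε P).IsSymm :=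
  (hR.add (isSymm_transpose_mul_mul hP B)).add (isSymm_one.smul ε)

lemma isSymm_riccatiStep (hQ : Q.IsSymm) (hR : R.IsSymm) (hP : P.IsSymm) :
    (riccatiStep A B Q R S ε P).IsSymm := by
  have hL : Aᵀ * P * B + Sᵀ = (Bᵀ * P * A + S)ᵀ := by
    simp [transpose_add, transpose_mul, hP.eq, Matrix.mul_assoc]
  rw [riccatiStep, hL]
  exact (hQ.add (isSymm_transpose_mul_mul hP A)).sub
    (isSymm_transpose_mul_mul (isSymm_riccatiWeight hR hP).inv _)

lemma stageCost_add_eq_riccatiStep (hR : R.IsSymm) (hP : P.IsSymm)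
    (hW : IsUnit (riccatiWeight B R ε P)) (x : ι → ℝ) (u : κ → ℝ) :
    stageCost Q R S ε x u + (A *ᵥ x + B *ᵥ u) ⬝ᵥ P *ᵥ (A *ᵥ x + B *ᵥ u)
      = x ⬝ᵥ riccatiStep A B Q R S ε P *ᵥ x
        + (u - riccatiGain A B R S ε P *ᵥ x) ⬝ᵥ riccatiWeight B R ε P
          *ᵥ (u - riccatiGain A B R S ε P *ᵥ x) := by
  have hL : Aᵀ * P * B + Sᵀ = (Bᵀ * P * A + S)ᵀ := by
    simp [transpose_add, transpose_mul, hP.eq, Matrix.mul_assoc]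
  have hsq := dotProduct_mulVec_add_two_mul_eq (isSymm_riccatiWeight hR hP) hW
    (Bᵀ * P * A + S) x u
  have hcross : (A *ᵥ x) ⬝ᵥ P *ᵥ (B *ᵥ u) = u ⬝ᵥ (Bᵀ * P * A) *ᵥ x := by
    rw [dotProduct_mulVec_comm_of_isSymm hP, mulVec_dotProduct_mulVec_mulVec]
  rw [riccatiStep, riccatiGain, hL, neg_mulVec, sub_neg_eq_add]
  simp only [riccatiWeight, stageCost, dotProduct_add_smul_one_mulVec] at hsq ⊢
  simp only [mulVec_add, dotProduct_add, add_dotProduct, sub_mulVec, add_mulVec, dotProduct_sub,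
    hcross, mulVec_dotProduct_mulVec_mulVec] at hsq ⊢
  linarith

end RiccatiStep

section RiccatiRecursion

variable {ι κ : Type*} [Fintype ι] [Fintype κ] [DecidableEq κ]
  (A : ℕ → Matrix ι ι ℝ) (B : ℕ → Matrix ι κ ℝ) (Q : ℕ → Matrix ι ι ℝ)
  (R : ℕ → Matrix κ κ ℝ) (S : ℕ → Matrix κ ι ℝ) (H : Matrix ι ι ℝ) (ε : ℝ) (N : ℕ)

/-- The backward Riccati recursion on the horizon `N`, with terminal value `H` at every `t ≥ N`. -/
def riccati (t : ℕ) : Matrix ι ι ℝ :=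
  if t < N then riccatiStep (A t) (B t) (Q t) (R t) (S t) ε (riccati (t + 1)) else H
termination_by N - t

def riccatiFeedback (t : ℕ) : Matrix κ ι ℝ :=
  riccatiGain (A t) (B t) (R t) (S t) ε (riccati A B Q R S H ε N (t + 1))

variable {A B Q R S H ε N}

lemma riccati_of_lt {t : ℕ} (ht : t < N) :
    riccati A B Q R S H ε N t
      = riccatiStep (A t) (B t) (Q t) (R t) (S t) ε (riccati A B Q R S H ε N (t + 1)) := by
  rw [riccati, if_pos ht]

lemma riccati_of_le {t : ℕ} (ht : N ≤ t) : riccati A B Q R S H ε N t = H := by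
  rw [riccati, if_neg (not_lt.mpr ht)]

theorem isSymm_riccati (hQ : ∀ t, (Q t).IsSymm) (hR : ∀ t, (R t).IsSymm) (hH : H.IsSymm)
    (t : ℕ) : (riccati A B Q R S H ε N t).IsSymm := by
  rcases lt_or_ge t N with ht | ht
  · rw [riccati_of_lt ht]
    exact isSymm_riccatiStep (hQ t) (hR t) (isSymm_riccati hQ hR hH (t + 1))
  · rw [riccati_of_le ht]
    exact hH
termination_by N - t

end RiccatiRecursion

section ClosedLoop

variable {n m : ℕ} {A : ℕ → Matrix (Fin n) (Fin n) ℝ} {B : ℕ → Matrix (Fin n) (Fin m) ℝ}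

lemma lqState_clControl (K : ℕ → Matrix (Fin m) (Fin n) ℝ) (v : ℕ → Fin m → ℝ)
    (x₀ : Fin n → ℝ) (t : ℕ) :
    lqState A B x₀ (clControl A B K v x₀) t = clState A B K v x₀ t := by
  induction t with
  | zero => rfl
  | succ t ih =>
    simp only [lqState, clState, clControl, ih, mulVec_add, add_mulVec, mulVec_mulVec]
    abel

lemma eq_clControl_of_forall_eq_mulVec_lqState {N : ℕ} {K : ℕ → Matrix (Fin m) (Fin n) ℝ}
    {x₀ : Fin n → ℝ} {u : ℕ → Fin m → ℝ} (h : ∀ t < N, u t = K t *ᵥ lqState A B x₀ u t) :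
    ∀ t < N, u t = clControl A B K (fun _ => 0) x₀ t := by
  have hstate : ∀ t ≤ N, lqState A B x₀ u t = clState A B K (fun _ => 0) x₀ t := by
    intro t
    induction t with
    | zero => intro _; rfl
    | succ t ih =>
      intro ht
      simp only [lqState, clState, h t ht, ih (Nat.le_of_succ_le ht), add_mulVec, mulVec_mulVec,
        mulVec_zero, add_zero]
  intro t ht
  rw [h t ht, hstate t ht.le, clControl, add_zero]

end ClosedLoop

section CostToGo

variable {n m : ℕ} (A : ℕ → Matrix (Fin n) (Fin n) ℝ) (B : ℕ → Matrix (Fin n) (Fin m) ℝ)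
  (Q : ℕ → Matrix (Fin n) (Fin n) ℝ) (R : ℕ → Matrix (Fin m) (Fin m) ℝ)
  (S : ℕ → Matrix (Fin m) (Fin n) ℝ) (H : Matrix (Fin n) (Fin n) ℝ) (ε : ℝ) (N : ℕ)

def costToGo (t₀ : ℕ) (x₀ : Fin n → ℝ) (u : ℕ → Fin m → ℝ) : ℝ :=
  (∑ t ∈ Ico t₀ N, stageCost (Q t) (R t) (S t) ε (lqState A B x₀ u t) (u t))
    + lqState A B x₀ u N ⬝ᵥ H *ᵥ lqState A B x₀ u N

def feedbackDefect (x₀ : Fin n → ℝ) (u : ℕ → Fin m → ℝ) (t : ℕ) : ℝ :=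
  (u t - riccatiFeedback A B Q R S H ε N t *ᵥ lqState A B x₀ u t)
    ⬝ᵥ riccatiWeight (B t) (R t) ε (riccati A B Q R S H ε N (t + 1))
      *ᵥ (u t - riccatiFeedback A B Q R S H ε N t *ᵥ lqState A B x₀ u t)

variable {A B Q R S H ε N}

lemma lqCostPert_eq_costToGo_zero (x₀ : Fin n → ℝ) (u : ℕ → Fin m → ℝ) :
    lqCostPert N A B Q R S H ε x₀ u = costToGo A B Q R S H ε N 0 x₀ u := by
  simp only [lqCostPert, lqCost, costToGo, stageCost, ← range_eq_Ico, mul_sum, sum_add_distrib]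
  ring

lemma costToGo_eq_sum_add_costToGo {t₀ t₁ : ℕ} (h₀₁ : t₀ ≤ t₁) (h₁ : t₁ ≤ N)
    (x₀ : Fin n → ℝ) (u : ℕ → Fin m → ℝ) :
    costToGo A B Q R S H ε N t₀ x₀ u
      = (∑ t ∈ Ico t₀ t₁, stageCost (Q t) (R t) (S t) ε (lqState A B x₀ u t) (u t))
        + costToGo A B Q R S H ε N t₁ x₀ u := by
  rw [costToGo, costToGo, ← sum_Ico_consecutive _ h₀₁ h₁, add_assoc]

/-- Summing the one-step Bellman identity backwards from the horizon. -/
theorem costToGo_eq_riccati_add_sum_feedbackDefect (hQ : ∀ t, (Q t).IsSymm)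
    (hR : ∀ t, (R t).IsSymm) (hH : H.IsSymm) {t₀ : ℕ} (ht₀ : t₀ ≤ N)
    (hW : ∀ t, t₀ ≤ t → t < N →
      IsUnit (riccatiWeight (B t) (R t) ε (riccati A B Q R S H ε N (t + 1))))
    (x₀ : Fin n → ℝ) (u : ℕ → Fin m → ℝ) :
    costToGo A B Q R S H ε N t₀ x₀ u
      = lqState A B x₀ u t₀ ⬝ᵥ riccati A B Q R S H ε N t₀ *ᵥ lqState A B x₀ u t₀
        + ∑ t ∈ Ico t₀ N, feedbackDefect A B Q R S H ε N x₀ u t := by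
  rcases ht₀.lt_or_eq with hlt | rfl
  · have ih := costToGo_eq_riccati_add_sum_feedbackDefect hQ hR hH hlt
      (fun t ht ht' => hW t (by omega) ht') x₀ u
    have hstep := stageCost_add_eq_riccatiStep (A := A t₀) (Q := Q t₀) (S := S t₀) (hR t₀)
      (isSymm_riccati hQ hR hH (t₀ + 1)) (hW t₀ le_rfl hlt) (lqState A B x₀ u t₀) (u t₀)
    rw [costToGo_eq_sum_add_costToGo (Nat.le_succ t₀) hlt, Nat.Ico_succ_singleton, sum_singleton,
      ih, sum_eq_sum_Ico_succ_bot hlt, riccati_of_lt hlt]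
    simp only [lqState, feedbackDefect, riccatiFeedback] at hstep ⊢
    linarith
  · simp [costToGo, riccati_of_le]
termination_by N - t₀

end CostToGo

section Optimality

variable {n m : ℕ} {A : ℕ → Matrix (Fin n) (Fin n) ℝ} {B : ℕ → Matrix (Fin n) (Fin m) ℝ}
  {Q : ℕ → Matrix (Fin n) (Fin n) ℝ} {R : ℕ → Matrix (Fin m) (Fin m) ℝ}
  {S : ℕ → Matrix (Fin m) (Fin n) ℝ} {H : Matrix (Fin n) (Fin n) ℝ} {ε : ℝ} {N : ℕ}

lemma posSemidef_of_forall_isUnit_riccatiWeight (hQ : ∀ t, (Q t).IsSymm)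
    (hR : ∀ t, (R t).IsSymm) (hH : H.IsSymm) (hε : 0 ≤ ε)
    (hpos : ∀ u : ℕ → Fin m → ℝ, 0 ≤ lqCost N A B Q R S H 0 u) {t : ℕ} (ht : t < N)
    (hW : ∀ s, t < s → s < N →
      IsUnit (riccatiWeight (B s) (R s) ε (riccati A B Q R S H ε N (s + 1)))) :
    (R t + (B t)ᵀ * riccati A B Q R S H ε N (t + 1) * B t).PosSemidef := by
  refine PosSemidef.of_dotProduct_mulVec_nonneg (isHermitian_iff_isSymm.mpr
    ((hR t).add (isSymm_transpose_mul_mul (isSymm_riccati hQ hR hH (t + 1)) (B t)))) fun w => ?_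
  rw [star_trivial]
  set u := clControl A B (fun s => if t < s then riccatiFeedback A B Q R S H ε N s else 0)
    (fun s => if s = t then w else 0) 0
  have hx : ∀ s ≤ t, lqState A B 0 u s = 0 := by
    intro s hs
    rw [lqState_clControl]
    induction s with
    | zero => rfl
    | succ s ih => simp [clState, ih (by omega), show s ≠ t by omega]
  have hu_lt : ∀ s < t, u s = 0 := fun s hs => by
    simp [u, clControl, ← lqState_clControl, hx s hs.le, hs.ne, hs.not_gt]
  have hu_t : u t = w := by simp [u, clControl]
  have hu_gt : ∀ s, t < s → u s = riccatiFeedback A B Q R S H ε N s *ᵥ lqState A B 0 u s :=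
    fun s hs => by simp [u, clControl, lqState_clControl, hs, hs.ne']
  have hcost : lqCostPert N A B Q R S H ε 0 u
      = w ⬝ᵥ (R t + (B t)ᵀ * riccati A B Q R S H ε N (t + 1) * B t) *ᵥ w + ε * (w ⬝ᵥ w) := by
    have hdefect : ∀ s ∈ Ico (t + 1) N, feedbackDefect A B Q R S H ε N 0 u s = 0 :=
      fun s hs => by simp [feedbackDefect, ← hu_gt s (mem_Ico.mp hs).1]
    have hstage : ∀ s ∈ range t, stageCost (Q s) (R s) (S s) ε (lqState A B 0 u s) (u s) = 0 :=
      fun s hs => by simp [stageCost, hx s (mem_range.mp hs).le, hu_lt s (mem_range.mp hs)]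
    rw [lqCostPert_eq_costToGo_zero, costToGo_eq_sum_add_costToGo (Nat.zero_le _) ht,
      costToGo_eq_riccati_add_sum_feedbackDefect hQ hR hH ht hW,
      sum_eq_zero hdefect, ← range_eq_Ico, sum_range_succ, sum_eq_zero hstage]
    simp only [stageCost, lqState, hx t le_rfl, hu_t, mulVec_zero, zero_add, dotProduct_zero,
      mulVec_dotProduct_mulVec_mulVec, add_mulVec, dotProduct_add]
    ring
  have hlow : ε * (w ⬝ᵥ w) ≤ lqCostPert N A B Q R S H ε 0 u := by
    have hw : w ⬝ᵥ w ≤ ∑ s ∈ range N, u s ⬝ᵥ u s := by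
      simpa [hu_t] using single_le_sum (fun s _ => dotProduct_self_nonneg (u s)) (mem_range.mpr ht)
    have := hpos u
    rw [lqCostPert]
    nlinarith
  linarith

theorem posSemidef_riccati (hQ : ∀ t, (Q t).IsSymm) (hR : ∀ t, (R t).IsSymm) (hH : H.IsSymm)
    (hε : 0 < ε) (hpos : ∀ u : ℕ → Fin m → ℝ, 0 ≤ lqCost N A B Q R S H 0 u) {t : ℕ}
    (ht : t < N) : (R t + (B t)ᵀ * riccati A B Q R S H ε N (t + 1) * B t).PosSemidef :=
  posSemidef_of_forall_isUnit_riccatiWeight hQ hR hH hε.le hpos ht fun s _ hs =>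
    (PosDef.posSemidef_add (posSemidef_riccati hQ hR hH hε hpos hs) (PosDef.one.smul hε)).isUnit
termination_by N - t

lemma posDef_riccatiWeight (hQ : ∀ t, (Q t).IsSymm) (hR : ∀ t, (R t).IsSymm) (hH : H.IsSymm)
    (hε : 0 < ε) (hpos : ∀ u : ℕ → Fin m → ℝ, 0 ≤ lqCost N A B Q R S H 0 u) {t : ℕ}
    (ht : t < N) : (riccatiWeight (B t) (R t) ε (riccati A B Q R S H ε N (t + 1))).PosDef :=
  PosDef.posSemidef_add (posSemidef_riccati hQ hR hH hε hpos ht) (PosDef.one.smul hε)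

theorem lqCostPert_eq_riccati_add_sum_feedbackDefect (hQ : ∀ t, (Q t).IsSymm)
    (hR : ∀ t, (R t).IsSymm) (hH : H.IsSymm) (hε : 0 < ε)
    (hpos : ∀ u : ℕ → Fin m → ℝ, 0 ≤ lqCost N A B Q R S H 0 u) (x₀ : Fin n → ℝ)
    (u : ℕ → Fin m → ℝ) :
    lqCostPert N A B Q R S H ε x₀ u
      = x₀ ⬝ᵥ riccati A B Q R S H ε N 0 *ᵥ x₀
        + ∑ t ∈ range N, feedbackDefect A B Q R S H ε N x₀ u t := by
  rw [lqCostPert_eq_costToGo_zero, range_eq_Ico,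
    costToGo_eq_riccati_add_sum_feedbackDefect hQ hR hH (Nat.zero_le N)
      (fun _ _ ht => (posDef_riccatiWeight hQ hR hH hε hpos ht).isUnit)]
  rfl

lemma feedbackDefect_nonneg (hQ : ∀ t, (Q t).IsSymm) (hR : ∀ t, (R t).IsSymm) (hH : H.IsSymm)
    (hε : 0 < ε) (hpos : ∀ u : ℕ → Fin m → ℝ, 0 ≤ lqCost N A B Q R S H 0 u) (x₀ : Fin n → ℝ)
    (u : ℕ → Fin m → ℝ) {t : ℕ} (ht : t < N) : 0 ≤ feedbackDefect A B Q R S H ε N x₀ u t := by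
  have := (posDef_riccatiWeight hQ hR hH hε hpos ht).posSemidef.dotProduct_mulVec_nonneg
    (u t - riccatiFeedback A B Q R S H ε N t *ᵥ lqState A B x₀ u t)
  rwa [star_trivial] at this

lemma feedbackDefect_eq_zero_iff (hQ : ∀ t, (Q t).IsSymm) (hR : ∀ t, (R t).IsSymm)
    (hH : H.IsSymm) (hε : 0 < ε) (hpos : ∀ u : ℕ → Fin m → ℝ, 0 ≤ lqCost N A B Q R S H 0 u)
    (x₀ : Fin n → ℝ) (u : ℕ → Fin m → ℝ) {t : ℕ} (ht : t < N) :
    feedbackDefect A B Q R S H ε N x₀ u t = 0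
      ↔ u t = riccatiFeedback A B Q R S H ε N t *ᵥ lqState A B x₀ u t := by
  refine ⟨fun h => sub_eq_zero.mp (by_contra fun hne => ?_), fun h => by simp [feedbackDefect, h]⟩
  have := (posDef_riccatiWeight hQ hR hH hε hpos ht).dotProduct_mulVec_pos hne
  rw [star_trivial] at this
  exact this.ne' h

lemma feedbackDefect_clControl (x₀ : Fin n → ℝ) (t : ℕ) :
    feedbackDefect A B Q R S H ε N x₀
      (clControl A B (riccatiFeedback A B Q R S H ε N) (fun _ => 0) x₀) t = 0 := by
  simp [feedbackDefect, lqState_clControl, clControl]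

lemma lqCostPert_clControl_riccatiFeedback (hQ : ∀ t, (Q t).IsSymm) (hR : ∀ t, (R t).IsSymm)
    (hH : H.IsSymm) (hε : 0 < ε) (hpos : ∀ u : ℕ → Fin m → ℝ, 0 ≤ lqCost N A B Q R S H 0 u)
    (x₀ : Fin n → ℝ) :
    lqCostPert N A B Q R S H ε x₀
        (clControl A B (riccatiFeedback A B Q R S H ε N) (fun _ => 0) x₀)
      = x₀ ⬝ᵥ riccati A B Q R S H ε N 0 *ᵥ x₀ := by
  simp [lqCostPert_eq_riccati_add_sum_feedbackDefect hQ hR hH hε hpos, feedbackDefect_clControl]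

theorem lqCostPert_clControl_riccatiFeedback_le (hQ : ∀ t, (Q t).IsSymm)
    (hR : ∀ t, (R t).IsSymm) (hH : H.IsSymm) (hε : 0 < ε)
    (hpos : ∀ u : ℕ → Fin m → ℝ, 0 ≤ lqCost N A B Q R S H 0 u) (x₀ : Fin n → ℝ)
    (u : ℕ → Fin m → ℝ) :
    lqCostPert N A B Q R S H ε x₀
        (clControl A B (riccatiFeedback A B Q R S H ε N) (fun _ => 0) x₀)
      ≤ lqCostPert N A B Q R S H ε x₀ u := by
  rw [lqCostPert_clControl_riccatiFeedback hQ hR hH hε hpos,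
    lqCostPert_eq_riccati_add_sum_feedbackDefect hQ hR hH hε hpos]
  exact le_add_of_nonneg_right <| sum_nonneg fun t ht =>
    feedbackDefect_nonneg hQ hR hH hε hpos x₀ u (mem_range.mp ht)

theorem eq_clControl_riccatiFeedback_of_forall_le (hQ : ∀ t, (Q t).IsSymm)
    (hR : ∀ t, (R t).IsSymm) (hH : H.IsSymm) (hε : 0 < ε)
    (hpos : ∀ u : ℕ → Fin m → ℝ, 0 ≤ lqCost N A B Q R S H 0 u) {x₀ : Fin n → ℝ}
    {ubar : ℕ → Fin m → ℝ}
    (hopt : ∀ u, lqCostPert N A B Q R S H ε x₀ ubar ≤ lqCostPert N A B Q R S H ε x₀ u) :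
    ∀ t < N, ubar t = clControl A B (riccatiFeedback A B Q R S H ε N) (fun _ => 0) x₀ t := by
  have hnonneg : ∀ t ∈ range N, 0 ≤ feedbackDefect A B Q R S H ε N x₀ ubar t :=
    fun t ht => feedbackDefect_nonneg hQ hR hH hε hpos x₀ ubar (mem_range.mp ht)
  have hzero : ∑ t ∈ range N, feedbackDefect A B Q R S H ε N x₀ ubar t = 0 := by
    have := hopt (clControl A B (riccatiFeedback A B Q R S H ε N) (fun _ => 0) x₀)
    rw [lqCostPert_clControl_riccatiFeedback hQ hR hH hε hpos,
      lqCostPert_eq_riccati_add_sum_feedbackDefect hQ hR hH hε hpos] at this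
    exact le_antisymm (by linarith) (sum_nonneg hnonneg)
  refine eq_clControl_of_forall_eq_mulVec_lqState fun t ht => ?_
  exact (feedbackDefect_eq_zero_iff hQ hR hH hε hpos x₀ ubar ht).mp
    ((sum_eq_zero_iff_of_nonneg hnonneg).mp hzero t (mem_range.mpr ht))

end Optimality

theorem stmt_8_general {n m : ℕ} (N : ℕ)
    (A : ℕ → Matrix (Fin n) (Fin n) ℝ) (B : ℕ → Matrix (Fin n) (Fin m) ℝ)
    (Q : ℕ → Matrix (Fin n) (Fin n) ℝ) (R : ℕ → Matrix (Fin m) (Fin m) ℝ)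
    (S : ℕ → Matrix (Fin m) (Fin n) ℝ) (H : Matrix (Fin n) (Fin n) ℝ)
    (hQ : ∀ t, (Q t).IsSymm) (hR : ∀ t, (R t).IsSymm) (hH : H.IsSymm)
    (hpos : ∀ u : ℕ → Fin m → ℝ, 0 ≤ lqCost N A B Q R S H 0 u)
    (ε : ℝ) (hε : 0 < ε) :
    ∃ P : ℕ → Matrix (Fin n) (Fin n) ℝ,
      (∀ t ≤ N, (P t).IsSymm) ∧ P N = H ∧
      (∀ t < N,
        (R t + (B t)ᵀ * P (t + 1) * B t).PosSemidef ∧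
        IsUnit (R t + (B t)ᵀ * P (t + 1) * B t + ε • (1 : Matrix (Fin m) (Fin m) ℝ)) ∧
        P t = Q t + (A t)ᵀ * P (t + 1) * A t
          - ((A t)ᵀ * P (t + 1) * B t + (S t)ᵀ)
            * (R t + (B t)ᵀ * P (t + 1) * B t + ε • (1 : Matrix (Fin m) (Fin m) ℝ))⁻¹
            * ((B t)ᵀ * P (t + 1) * A t + S t)) ∧
      (let K : ℕ → Matrix (Fin m) (Fin n) ℝ := fun t =>
          -((R t + (B t)ᵀ * P (t + 1) * B t + ε • (1 : Matrix (Fin m) (Fin m) ℝ))⁻¹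
            * ((B t)ᵀ * P (t + 1) * A t + S t))
       (∀ x₀ : Fin n → ℝ, ∀ u : ℕ → Fin m → ℝ,
          lqCostPert N A B Q R S H ε x₀ (clControl A B K (fun _ => 0) x₀)
            ≤ lqCostPert N A B Q R S H ε x₀ u) ∧
       (∀ x₀ : Fin n → ℝ, ∀ ubar : ℕ → Fin m → ℝ,
          (∀ u : ℕ → Fin m → ℝ,
            lqCostPert N A B Q R S H ε x₀ ubar ≤ lqCostPert N A B Q R S H ε x₀ u) →
          ∀ t < N, ubar t = clControl A B K (fun _ => 0) x₀ t)) :=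
  ⟨riccati A B Q R S H ε N, fun t _ => isSymm_riccati hQ hR hH t, riccati_of_le le_rfl,
    fun _ ht => ⟨posSemidef_riccati hQ hR hH hε hpos ht,
      (posDef_riccatiWeight hQ hR hH hε hpos ht).isUnit, riccati_of_lt ht⟩,
    lqCostPert_clControl_riccatiFeedback_le hQ hR hH hε hpos,
    fun _ _ => eq_clControl_riccatiFeedback_of_forall_le hQ hR hH hε hpos⟩

/-- Theorem 3: the perturbed Riccati recursion is well defined, with
`R_t + B_t′P^ε_{t+1}B_t + εI ⪰ εI` (hence invertible); the resulting `(K^ε, 0)` is a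
closed-loop optimal solution of Problem (LQ)_ε and its outcome is the unique open-loop
optimal control of Problem (LQ)_ε. -/
theorem stmt_8 {n m : ℕ} (hn : 0 < n) (hm : 0 < m) (N : ℕ) (hN : 0 < N)
    (A : ℕ → Matrix (Fin n) (Fin n) ℝ) (B : ℕ → Matrix (Fin n) (Fin m) ℝ)
    (Q : ℕ → Matrix (Fin n) (Fin n) ℝ) (R : ℕ → Matrix (Fin m) (Fin m) ℝ)
    (S : ℕ → Matrix (Fin m) (Fin n) ℝ) (H : Matrix (Fin n) (Fin n) ℝ)
    (hQ : ∀ t, (Q t).IsSymm) (hR : ∀ t, (R t).IsSymm) (hH : H.IsSymm)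
    (hpos : ∀ u : ℕ → Fin m → ℝ, 0 ≤ lqCost N A B Q R S H 0 u)
    (ε : ℝ) (hε : 0 < ε) :
    ∃ P : ℕ → Matrix (Fin n) (Fin n) ℝ,
      (∀ t ≤ N, (P t).IsSymm) ∧ P N = H ∧
      (∀ t < N,
        (R t + (B t)ᵀ * P (t + 1) * B t).PosSemidef ∧
        IsUnit (R t + (B t)ᵀ * P (t + 1) * B t + ε • (1 : Matrix (Fin m) (Fin m) ℝ)) ∧
        P t = Q t + (A t)ᵀ * P (t + 1) * A t
          - ((A t)ᵀ * P (t + 1) * B t + (S t)ᵀ)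
            * (R t + (B t)ᵀ * P (t + 1) * B t + ε • (1 : Matrix (Fin m) (Fin m) ℝ))⁻¹
            * ((B t)ᵀ * P (t + 1) * A t + S t)) ∧
      (let K : ℕ → Matrix (Fin m) (Fin n) ℝ := fun t =>
          -((R t + (B t)ᵀ * P (t + 1) * B t + ε • (1 : Matrix (Fin m) (Fin m) ℝ))⁻¹
            * ((B t)ᵀ * P (t + 1) * A t + S t))
       (∀ x₀ : Fin n → ℝ, ∀ u : ℕ → Fin m → ℝ,
          lqCostPert N A B Q R S H ε x₀ (clControl A B K (fun _ => 0) x₀)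
            ≤ lqCostPert N A B Q R S H ε x₀ u) ∧
       (∀ x₀ : Fin n → ℝ, ∀ ubar : ℕ → Fin m → ℝ,
          (∀ u : ℕ → Fin m → ℝ,
            lqCostPert N A B Q R S H ε x₀ ubar ≤ lqCostPert N A B Q R S H ε x₀ u) →
          ∀ t < N, ubar t = clControl A B K (fun _ => 0) x₀ t)) :=
  stmt_8_general N A B Q R S H hQ hR hH hpos ε hε
end
end

section
/- (Inequality (23): Theorem 4, (1) ⇒ (2).) Suppose J(0, u) ≥ 0 for every control u, and suppose ū is an open-loop optimal control for Problem (LQ) with initial value x₀. Then for every ε > 0, ε Σ_{t=0}^{N−1}|u^ε_t|² ≤ V_ε(x₀) − V(x₀) ≤ ε Σ_{t=0}^{N−1}|ū_t|²; in particular Σ_{t=0}^{N−1}|u^ε_t|² ≤ Σ_{t=0}^{N−1}|ū_t|² for all ε > 0, so the family {u^ε : ε > 0} is bounded. -/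
open Matrix Finset

noncomputable section

/-- Auxiliary backward recursion for the perturbed Riccati equation:
`lqPAux ... k` is the Riccati solution at time `N - k`. -/
def lqPAux {n m : ℕ} (N : ℕ) (A : ℕ → Matrix (Fin n) (Fin n) ℝ)
    (B : ℕ → Matrix (Fin n) (Fin m) ℝ) (Q : ℕ → Matrix (Fin n) (Fin n) ℝ)
    (R : ℕ → Matrix (Fin m) (Fin m) ℝ) (S : ℕ → Matrix (Fin m) (Fin n) ℝ)
    (H : Matrix (Fin n) (Fin n) ℝ) (ε : ℝ) : ℕ → Matrix (Fin n) (Fin n) ℝ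
  | 0 => H
  | k + 1 =>
    Q (N - (k + 1)) + (A (N - (k + 1)))ᵀ * lqPAux N A B Q R S H ε k * A (N - (k + 1))
      - ((A (N - (k + 1)))ᵀ * lqPAux N A B Q R S H ε k * B (N - (k + 1)) + (S (N - (k + 1)))ᵀ)
        * (R (N - (k + 1)) + (B (N - (k + 1)))ᵀ * lqPAux N A B Q R S H ε k * B (N - (k + 1))
            + ε • (1 : Matrix (Fin m) (Fin m) ℝ))⁻¹
        * ((B (N - (k + 1)))ᵀ * lqPAux N A B Q R S H ε k * A (N - (k + 1)) + S (N - (k + 1)))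

/-- Solution `P^ε_t` of the perturbed Riccati recursion
`P^ε_N = H`, `P^ε_t = Q_t + A_t′P^ε_{t+1}A_t − (A_t′P^ε_{t+1}B_t + S_t′)(R_t +
B_t′P^ε_{t+1}B_t + εI)⁻¹(B_t′P^ε_{t+1}A_t + S_t)`. -/
def lqPe {n m : ℕ} (N : ℕ) (A : ℕ → Matrix (Fin n) (Fin n) ℝ)
    (B : ℕ → Matrix (Fin n) (Fin m) ℝ) (Q : ℕ → Matrix (Fin n) (Fin n) ℝ)
    (R : ℕ → Matrix (Fin m) (Fin m) ℝ) (S : ℕ → Matrix (Fin m) (Fin n) ℝ)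
    (H : Matrix (Fin n) (Fin n) ℝ) (ε : ℝ) (t : ℕ) : Matrix (Fin n) (Fin n) ℝ :=
  lqPAux N A B Q R S H ε (N - t)

/-- Perturbed feedback gain `K^ε_t = −(R_t + B_t′P^ε_{t+1}B_t + εI)⁻¹(B_t′P^ε_{t+1}A_t + S_t)`. -/
def lqKe {n m : ℕ} (N : ℕ) (A : ℕ → Matrix (Fin n) (Fin n) ℝ)
    (B : ℕ → Matrix (Fin n) (Fin m) ℝ) (Q : ℕ → Matrix (Fin n) (Fin n) ℝ)
    (R : ℕ → Matrix (Fin m) (Fin m) ℝ) (S : ℕ → Matrix (Fin m) (Fin n) ℝ)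
    (H : Matrix (Fin n) (Fin n) ℝ) (ε : ℝ) (t : ℕ) : Matrix (Fin m) (Fin n) ℝ :=
  -((R t + (B t)ᵀ * lqPe N A B Q R S H ε (t + 1) * B t
      + ε • (1 : Matrix (Fin m) (Fin m) ℝ))⁻¹
    * ((B t)ᵀ * lqPe N A B Q R S H ε (t + 1) * A t + S t))

/-- Perturbed optimal control `u^ε_t = K^ε_t x^ε_t`, where `x^ε` is the closed-loop state
`x^ε_{t+1} = (A_t + B_t K^ε_t) x^ε_t`, `x^ε_0 = x₀`. -/
def lqUe {n m : ℕ} (N : ℕ) (A : ℕ → Matrix (Fin n) (Fin n) ℝ)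
    (B : ℕ → Matrix (Fin n) (Fin m) ℝ) (Q : ℕ → Matrix (Fin n) (Fin n) ℝ)
    (R : ℕ → Matrix (Fin m) (Fin m) ℝ) (S : ℕ → Matrix (Fin m) (Fin n) ℝ)
    (H : Matrix (Fin n) (Fin n) ℝ) (ε : ℝ) (x₀ : Fin n → ℝ) (t : ℕ) : Fin m → ℝ :=
  lqKe N A B Q R S H ε t *ᵥ
    clState A B (lqKe N A B Q R S H ε) (fun _ => 0) x₀ t


/-! ### Auxiliary lemmas -/

lemma dp_swap {a b : ℕ} (M : Matrix (Fin a) (Fin b) ℝ) (x : Fin a → ℝ) (y : Fin b → ℝ) :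
    x ⬝ᵥ M *ᵥ y = y ⬝ᵥ Mᵀ *ᵥ x := by
  rw [Matrix.dotProduct_mulVec, Matrix.mulVec_transpose, dotProduct_comm]

lemma dp_lmul {a b : ℕ} (C : Matrix (Fin a) (Fin b) ℝ) (x : Fin a → ℝ) (w : Fin b → ℝ) :
    (C *ᵥ w) ⬝ᵥ x = w ⬝ᵥ Cᵀ *ᵥ x := by
  rw [dotProduct_comm, dp_swap]

lemma dp_self_nonneg {a : ℕ} (v : Fin a → ℝ) : 0 ≤ v ⬝ᵥ v :=
  Finset.sum_nonneg fun i _ => mul_self_nonneg _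

lemma dp_self_pos {a : ℕ} (v : Fin a → ℝ) (hv : v ≠ 0) : 0 < v ⬝ᵥ v := by
  obtain ⟨i, hi⟩ := Function.ne_iff.mp hv
  have h1 : 0 < v i * v i := by
    have := hi; rcases lt_or_gt_of_ne (show v i ≠ 0 from hi) with h | h <;> nlinarith
  calc (0:ℝ) < v i * v i := h1
    _ ≤ ∑ j, v j * v j := Finset.single_le_sum (fun j _ => mul_self_nonneg (v j))
        (Finset.mem_univ i)

lemma dp_pert {a : ℕ} (ε : ℝ) (Rt : Matrix (Fin a) (Fin a) ℝ) (u : Fin a → ℝ) :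
    u ⬝ᵥ (Rt + ε • (1 : Matrix (Fin a) (Fin a) ℝ)) *ᵥ u = u ⬝ᵥ Rt *ᵥ u + ε * (u ⬝ᵥ u) := by
  rw [Matrix.add_mulVec, dotProduct_add, Matrix.smul_mulVec, Matrix.one_mulVec,
    dotProduct_smul, smul_eq_mul]

/-- completion of squares -/
lemma comp_sq {n m : ℕ} (At : Matrix (Fin n) (Fin n) ℝ) (Bt : Matrix (Fin n) (Fin m) ℝ)
    (Qt : Matrix (Fin n) (Fin n) ℝ) (Rt : Matrix (Fin m) (Fin m) ℝ)
    (St : Matrix (Fin m) (Fin n) ℝ) (P : Matrix (Fin n) (Fin n) ℝ) (hP : P.IsSymm)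
    (hM : (Rt + Btᵀ * P * Bt).IsSymm) (hdet : IsUnit (Rt + Btᵀ * P * Bt).det)
    (x : Fin n → ℝ) (u : Fin m → ℝ) :
    x ⬝ᵥ Qt *ᵥ x + 2 * (u ⬝ᵥ St *ᵥ x) + u ⬝ᵥ Rt *ᵥ u
      + (At *ᵥ x + Bt *ᵥ u) ⬝ᵥ P *ᵥ (At *ᵥ x + Bt *ᵥ u)
    = x ⬝ᵥ (Qt + Atᵀ * P * At
          - (Atᵀ * P * Bt + Stᵀ) * (Rt + Btᵀ * P * Bt)⁻¹ * (Btᵀ * P * At + St)) *ᵥ x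
      + (u + ((Rt + Btᵀ * P * Bt)⁻¹ * (Btᵀ * P * At + St)) *ᵥ x) ⬝ᵥ
          (Rt + Btᵀ * P * Bt) *ᵥ (u + ((Rt + Btᵀ * P * Bt)⁻¹ * (Btᵀ * P * At + St)) *ᵥ x) := by
  set M := Rt + Btᵀ * P * Bt with hMdef
  set L := Btᵀ * P * At + St with hLdef
  have hPT : Pᵀ = P := hP
  have hMT : Mᵀ = M := hM
  have hMinvT : (M⁻¹)ᵀ = M⁻¹ := by rw [Matrix.transpose_nonsing_inv, hMT]
  have hLT : Lᵀ = Atᵀ * P * Bt + Stᵀ := by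
    simp [hLdef, Matrix.transpose_add, Matrix.transpose_mul, hPT, Matrix.mul_assoc]
  have hcancel : M * (M⁻¹ * L) = L := Matrix.mul_nonsing_inv_cancel_left M L hdet
  have hGMG : (M⁻¹ * L)ᵀ * L = Lᵀ * M⁻¹ * L := by
    rw [Matrix.transpose_mul, hMinvT]
  have hGM : ((M⁻¹ * L)ᵀ * M)ᵀ = L := by
    rw [Matrix.transpose_mul, Matrix.transpose_transpose, hMT, hcancel]
  have e1 : (At *ᵥ x + Bt *ᵥ u) ⬝ᵥ P *ᵥ (At *ᵥ x + Bt *ᵥ u)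
      = x ⬝ᵥ (Atᵀ * P * At) *ᵥ x + 2 * (u ⬝ᵥ (Btᵀ * P * At) *ᵥ x)
        + u ⬝ᵥ (Btᵀ * P * Bt) *ᵥ u := by
    rw [Matrix.mulVec_add, dotProduct_add, add_dotProduct, add_dotProduct,
      dp_lmul At, dp_lmul Bt, dp_lmul At, dp_lmul Bt]
    simp only [Matrix.mulVec_mulVec, ← Matrix.mul_assoc]
    have : x ⬝ᵥ (Atᵀ * P * Bt) *ᵥ u = u ⬝ᵥ (Btᵀ * P * At) *ᵥ x := by
      rw [dp_swap, Matrix.transpose_mul, Matrix.transpose_mul, Matrix.transpose_transpose, hPT,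
        Matrix.mul_assoc]
    rw [this]; ring
  have e2 : u ⬝ᵥ M *ᵥ u = u ⬝ᵥ Rt *ᵥ u + u ⬝ᵥ (Btᵀ * P * Bt) *ᵥ u := by
    rw [hMdef, Matrix.add_mulVec, dotProduct_add]
  have e3 : u ⬝ᵥ L *ᵥ x = u ⬝ᵥ (Btᵀ * P * At) *ᵥ x + u ⬝ᵥ St *ᵥ x := by
    rw [hLdef, Matrix.add_mulVec, dotProduct_add]
  have e4 : (u + (M⁻¹ * L) *ᵥ x) ⬝ᵥ M *ᵥ (u + (M⁻¹ * L) *ᵥ x)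
      = u ⬝ᵥ M *ᵥ u + 2 * (u ⬝ᵥ L *ᵥ x) + x ⬝ᵥ (Lᵀ * M⁻¹ * L) *ᵥ x := by
    rw [Matrix.mulVec_add, dotProduct_add, add_dotProduct, add_dotProduct,
      Matrix.mulVec_mulVec, hcancel]
    rw [dp_lmul, dp_lmul]
    simp only [Matrix.mulVec_mulVec, ← Matrix.mul_assoc]
    rw [hGMG]
    have : x ⬝ᵥ ((M⁻¹ * L)ᵀ * M) *ᵥ u = u ⬝ᵥ L *ᵥ x := by rw [dp_swap, hGM]
    rw [this]; ring
  have e5 : x ⬝ᵥ (Qt + Atᵀ * P * At - Lᵀ * M⁻¹ * L) *ᵥ x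
      = x ⬝ᵥ Qt *ᵥ x + x ⬝ᵥ (Atᵀ * P * At) *ᵥ x - x ⬝ᵥ (Lᵀ * M⁻¹ * L) *ᵥ x := by
    rw [Matrix.sub_mulVec, Matrix.add_mulVec, dotProduct_sub, dotProduct_add]
  rw [e1, e4, ← hLT, e5, e2, e3]; ring

/-- one step of the perturbed Riccati recursion -/
lemma riccati_step {n m : ℕ} (ε : ℝ) (hε : 0 < ε) (A₁ : Matrix (Fin n) (Fin n) ℝ)
    (B₁ : Matrix (Fin n) (Fin m) ℝ) (Q₁ : Matrix (Fin n) (Fin n) ℝ)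
    (R₁ : Matrix (Fin m) (Fin m) ℝ) (S₁ : Matrix (Fin m) (Fin n) ℝ)
    (P : Matrix (Fin n) (Fin n) ℝ) (hP : P.IsSymm) (hQ₁ : Q₁.IsSymm) (hR₁ : R₁.IsSymm)
    (hMlb : ∀ v : Fin m → ℝ, ε * (v ⬝ᵥ v)
        ≤ v ⬝ᵥ (R₁ + B₁ᵀ * P * B₁ + ε • (1 : Matrix (Fin m) (Fin m) ℝ)) *ᵥ v) :
    (Q₁ + A₁ᵀ * P * A₁
        - (A₁ᵀ * P * B₁ + S₁ᵀ) * (R₁ + B₁ᵀ * P * B₁ + ε • (1 : Matrix (Fin m) (Fin m) ℝ))⁻¹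
          * (B₁ᵀ * P * A₁ + S₁)).IsSymm
    ∧ (∀ (x : Fin n → ℝ) (u0 : Fin m → ℝ),
        x ⬝ᵥ Q₁ *ᵥ x + 2 * (u0 ⬝ᵥ S₁ *ᵥ x) + u0 ⬝ᵥ R₁ *ᵥ u0 + ε * (u0 ⬝ᵥ u0)
          + (A₁ *ᵥ x + B₁ *ᵥ u0) ⬝ᵥ P *ᵥ (A₁ *ᵥ x + B₁ *ᵥ u0)
        = x ⬝ᵥ (Q₁ + A₁ᵀ * P * A₁
              - (A₁ᵀ * P * B₁ + S₁ᵀ)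
                * (R₁ + B₁ᵀ * P * B₁ + ε • (1 : Matrix (Fin m) (Fin m) ℝ))⁻¹
                * (B₁ᵀ * P * A₁ + S₁)) *ᵥ x
          + (u0 + ((R₁ + B₁ᵀ * P * B₁ + ε • (1 : Matrix (Fin m) (Fin m) ℝ))⁻¹
                * (B₁ᵀ * P * A₁ + S₁)) *ᵥ x) ⬝ᵥ
              (R₁ + B₁ᵀ * P * B₁ + ε • (1 : Matrix (Fin m) (Fin m) ℝ)) *ᵥ
              (u0 + ((R₁ + B₁ᵀ * P * B₁ + ε • (1 : Matrix (Fin m) (Fin m) ℝ))⁻¹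
                * (B₁ᵀ * P * A₁ + S₁)) *ᵥ x)) := by
  have hMsym : (R₁ + B₁ᵀ * P * B₁ + ε • (1 : Matrix (Fin m) (Fin m) ℝ)).IsSymm := by
    unfold Matrix.IsSymm
    rw [Matrix.transpose_add, Matrix.transpose_add, Matrix.transpose_smul,
      Matrix.transpose_one, hR₁, Matrix.transpose_mul, Matrix.transpose_mul,
      Matrix.transpose_transpose, hP, Matrix.mul_assoc]
  have hdet : IsUnit (R₁ + B₁ᵀ * P * B₁ + ε • (1 : Matrix (Fin m) (Fin m) ℝ)).det := by
    rw [isUnit_iff_ne_zero]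
    intro h0
    obtain ⟨v, hv, hMv⟩ := (Matrix.exists_mulVec_eq_zero_iff).mpr h0
    have h1 := hMlb v
    rw [hMv, dotProduct_zero] at h1
    have h2 := dp_self_pos v hv
    nlinarith
  have key : ∀ (x : Fin n → ℝ) (u0 : Fin m → ℝ),
      x ⬝ᵥ Q₁ *ᵥ x + 2 * (u0 ⬝ᵥ S₁ *ᵥ x) + u0 ⬝ᵥ R₁ *ᵥ u0 + ε * (u0 ⬝ᵥ u0)
        + (A₁ *ᵥ x + B₁ *ᵥ u0) ⬝ᵥ P *ᵥ (A₁ *ᵥ x + B₁ *ᵥ u0)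
      = x ⬝ᵥ (Q₁ + A₁ᵀ * P * A₁
            - (A₁ᵀ * P * B₁ + S₁ᵀ)
              * (R₁ + B₁ᵀ * P * B₁ + ε • (1 : Matrix (Fin m) (Fin m) ℝ))⁻¹
              * (B₁ᵀ * P * A₁ + S₁)) *ᵥ x
        + (u0 + ((R₁ + B₁ᵀ * P * B₁ + ε • (1 : Matrix (Fin m) (Fin m) ℝ))⁻¹
              * (B₁ᵀ * P * A₁ + S₁)) *ᵥ x) ⬝ᵥ
            (R₁ + B₁ᵀ * P * B₁ + ε • (1 : Matrix (Fin m) (Fin m) ℝ)) *ᵥ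
            (u0 + ((R₁ + B₁ᵀ * P * B₁ + ε • (1 : Matrix (Fin m) (Fin m) ℝ))⁻¹
              * (B₁ᵀ * P * A₁ + S₁)) *ᵥ x) := by
    intro x u0
    have hM' : R₁ + ε • (1 : Matrix (Fin m) (Fin m) ℝ) + B₁ᵀ * P * B₁
        = R₁ + B₁ᵀ * P * B₁ + ε • (1 : Matrix (Fin m) (Fin m) ℝ) := add_right_comm _ _ _
    have h := comp_sq A₁ B₁ Q₁ (R₁ + ε • (1 : Matrix (Fin m) (Fin m) ℝ)) S₁ P hP
      (by rw [hM']; exact hMsym) (by rw [hM']; exact hdet) x u0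
    rw [hM', dp_pert] at h
    have hQ : Q₁ + A₁ᵀ * P * A₁
        - (A₁ᵀ * P * B₁ + S₁ᵀ) * (R₁ + B₁ᵀ * P * B₁ + ε • (1:Matrix (Fin m) (Fin m) ℝ))⁻¹
          * (B₁ᵀ * P * A₁ + S₁)
        = Q₁ + A₁ᵀ * P * A₁
        - (A₁ᵀ * P * B₁ + S₁ᵀ) * (R₁ + B₁ᵀ * P * B₁ + ε • (1:Matrix (Fin m) (Fin m) ℝ))⁻¹
          * (B₁ᵀ * P * A₁ + S₁) := rfl
    linarith [h]
  refine ⟨?_, key⟩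
  · unfold Matrix.IsSymm
    simp only [Matrix.transpose_sub, Matrix.transpose_add, Matrix.transpose_mul,
      Matrix.transpose_smul, Matrix.transpose_one, Matrix.transpose_transpose,
      Matrix.transpose_nonsing_inv, hP.eq, hQ₁.eq, hR₁.eq, Matrix.mul_assoc]

section CTG
variable {n m : ℕ} (N : ℕ) (A : ℕ → Matrix (Fin n) (Fin n) ℝ) (B : ℕ → Matrix (Fin n) (Fin m) ℝ)
  (Q : ℕ → Matrix (Fin n) (Fin n) ℝ) (R : ℕ → Matrix (Fin m) (Fin m) ℝ)
  (S : ℕ → Matrix (Fin m) (Fin n) ℝ) (H : Matrix (Fin n) (Fin n) ℝ) (ε : ℝ)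

/-- cost-to-go from time `t`, state `x`, relative control `u`. -/
def ctg (t : ℕ) (x : Fin n → ℝ) (u : ℕ → Fin m → ℝ) : ℝ :=
  (∑ k ∈ range (N - t),
      (lqState (fun s => A (t + s)) (fun s => B (t + s)) x u k ⬝ᵥ Q (t + k) *ᵥ
          lqState (fun s => A (t + s)) (fun s => B (t + s)) x u k
        + 2 * (u k ⬝ᵥ S (t + k) *ᵥ lqState (fun s => A (t + s)) (fun s => B (t + s)) x u k)
        + u k ⬝ᵥ R (t + k) *ᵥ u k + ε * (u k ⬝ᵥ u k)))
    + lqState (fun s => A (t + s)) (fun s => B (t + s)) x u (N - t) ⬝ᵥ H *ᵥ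
        lqState (fun s => A (t + s)) (fun s => B (t + s)) x u (N - t)

lemma lqState_shift (t : ℕ) (x : Fin n → ℝ) (u : ℕ → Fin m → ℝ) (k : ℕ) :
    lqState (fun s => A (t + s)) (fun s => B (t + s)) x u (k + 1)
      = lqState (fun s => A (t + 1 + s)) (fun s => B (t + 1 + s))
          (A t *ᵥ x + B t *ᵥ u 0) (fun s => u (s + 1)) k := by
  induction k with
  | zero => simp [lqState]
  | succ k ih =>
      show A (t + (k+1)) *ᵥ _ + B (t + (k+1)) *ᵥ u (k+1)
        = A (t + 1 + k) *ᵥ _ + B (t + 1 + k) *ᵥ u (k+1)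
      rw [ih, show t + (k+1) = t + 1 + k by omega]

lemma ctg_succ (t : ℕ) (ht : t < N) (x : Fin n → ℝ) (u : ℕ → Fin m → ℝ) :
    ctg N A B Q R S H ε t x u
      = x ⬝ᵥ Q t *ᵥ x + 2 * (u 0 ⬝ᵥ S t *ᵥ x) + u 0 ⬝ᵥ R t *ᵥ u 0 + ε * (u 0 ⬝ᵥ u 0)
        + ctg N A B Q R S H ε (t + 1) (A t *ᵥ x + B t *ᵥ u 0) (fun k => u (k + 1)) := by
  unfold ctg
  have h1 : N - t = (N - (t + 1)) + 1 := by omega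
  set X := lqState (fun s => A (t + s)) (fun s => B (t + s)) x u with hX
  set X' := lqState (fun s => A (t + 1 + s)) (fun s => B (t + 1 + s))
      (A t *ᵥ x + B t *ᵥ u 0) (fun s => u (s + 1)) with hX'
  have hb : ∀ k, X (k + 1) = X' k := fun k => lqState_shift A B t x u k
  have hsum : ∑ k ∈ range (N - (t + 1)),
        (X (k + 1) ⬝ᵥ Q (t + (k + 1)) *ᵥ X (k + 1)
          + 2 * (u (k + 1) ⬝ᵥ S (t + (k + 1)) *ᵥ X (k + 1))
          + u (k + 1) ⬝ᵥ R (t + (k + 1)) *ᵥ u (k + 1) + ε * (u (k + 1) ⬝ᵥ u (k + 1)))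
      = ∑ k ∈ range (N - (t + 1)),
        (X' k ⬝ᵥ Q (t + 1 + k) *ᵥ X' k
          + 2 * ((fun s => u (s + 1)) k ⬝ᵥ S (t + 1 + k) *ᵥ X' k)
          + (fun s => u (s + 1)) k ⬝ᵥ R (t + 1 + k) *ᵥ (fun s => u (s + 1)) k
          + ε * ((fun s => u (s + 1)) k ⬝ᵥ (fun s => u (s + 1)) k)) :=
    Finset.sum_congr rfl fun k _ => by
      rw [hb k, show t + (k + 1) = t + 1 + k from by omega]
  rw [h1]
  rw [Finset.sum_range_succ']
  rw [hsum, hb (N - (t + 1))]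
  have h0 : X 0 = x := rfl
  rw [h0, show t + 0 = t from rfl]
  ring

lemma ctg_spec (t : ℕ) (ht : t ≤ N) (x₀ : Fin n → ℝ) (u : ℕ → Fin m → ℝ) :
    lqCostPert N A B Q R S H ε x₀ u
      = (∑ s ∈ range t,
          (lqState A B x₀ u s ⬝ᵥ Q s *ᵥ lqState A B x₀ u s
            + 2 * (u s ⬝ᵥ S s *ᵥ lqState A B x₀ u s)
            + u s ⬝ᵥ R s *ᵥ u s + ε * (u s ⬝ᵥ u s)))
        + ctg N A B Q R S H ε t (lqState A B x₀ u t) (fun k => u (t + k)) := by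
  induction t with
  | zero =>
      unfold ctg lqCostPert lqCost
      simp only [Nat.zero_add, Nat.sub_zero, range_zero, sum_empty, zero_add]
      have h0 : lqState A B x₀ u 0 = x₀ := rfl
      rw [h0]
      simp only [Finset.sum_add_distrib, Finset.mul_sum]
      ring
  | succ t ih =>
      rw [ih (by omega), ctg_succ N A B Q R S H ε t (by omega), Finset.sum_range_succ]
      have hx : A t *ᵥ lqState A B x₀ u t + B t *ᵥ u (t + 0) = lqState A B x₀ u (t + 1) := by
        rw [show t + 0 = t from rfl]; rfl
      have hu : (fun k => (fun k' => u (t + k')) (k + 1)) = fun k => u (t + 1 + k) := by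
        funext k; show u (t + (k + 1)) = u (t + 1 + k)
        rw [show t + (k + 1) = t + 1 + k by omega]
      rw [hx, hu]
      exact (add_assoc _ _ _).symm

lemma ctg_zero (x : Fin n → ℝ) (u : ℕ → Fin m → ℝ) :
    ctg N A B Q R S H ε 0 x u = lqCostPert N A B Q R S H ε x u := by
  have h := ctg_spec N A B Q R S H ε 0 (Nat.zero_le N) x u
  simp only [range_zero, sum_empty, zero_add, Nat.zero_add] at h
  rw [h]
  rfl

/-- feedback control from time `t`, initial state `x` (relative indexing). -/
def fbCtrl (t : ℕ) (x : Fin n → ℝ) : ℕ → Fin m → ℝ := fun k =>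
  lqKe N A B Q R S H ε (t + k) *ᵥ
    clState (fun s => A (t + s)) (fun s => B (t + s))
      (fun s => lqKe N A B Q R S H ε (t + s)) (fun _ => 0) x k

lemma fb_state (t : ℕ) (x : Fin n → ℝ) (k : ℕ) :
    lqState (fun s => A (t + s)) (fun s => B (t + s)) x (fbCtrl N A B Q R S H ε t x) k
      = clState (fun s => A (t + s)) (fun s => B (t + s))
          (fun s => lqKe N A B Q R S H ε (t + s)) (fun _ => 0) x k := by
  induction k with
  | zero => rfl
  | succ k ih =>
      show A (t + k) *ᵥ _ + B (t + k) *ᵥ fbCtrl N A B Q R S H ε t x k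
        = (A (t + k) + B (t + k) * lqKe N A B Q R S H ε (t + k)) *ᵥ _ + B (t + k) *ᵥ 0
      rw [ih, Matrix.mulVec_zero, add_zero, Matrix.add_mulVec, fbCtrl,
        Matrix.mulVec_mulVec]

lemma fb_cond (t : ℕ) (x : Fin n → ℝ) (k : ℕ) :
    fbCtrl N A B Q R S H ε t x k
      = lqKe N A B Q R S H ε (t + k) *ᵥ
          lqState (fun s => A (t + s)) (fun s => B (t + s)) x
            (fbCtrl N A B Q R S H ε t x) k := by
  rw [fb_state]; rfl

end CTG

/-- Main backward induction: value function of the perturbed problem. -/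
lemma lq_main {n m : ℕ} (N : ℕ) (A : ℕ → Matrix (Fin n) (Fin n) ℝ)
    (B : ℕ → Matrix (Fin n) (Fin m) ℝ) (Q : ℕ → Matrix (Fin n) (Fin n) ℝ)
    (R : ℕ → Matrix (Fin m) (Fin m) ℝ) (S : ℕ → Matrix (Fin m) (Fin n) ℝ)
    (H : Matrix (Fin n) (Fin n) ℝ) (ε : ℝ) (hε : 0 < ε)
    (hQ : ∀ t, (Q t).IsSymm) (hR : ∀ t, (R t).IsSymm) (hH : H.IsSymm)
    (hpos : ∀ u : ℕ → Fin m → ℝ, 0 ≤ lqCost N A B Q R S H 0 u) :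
    ∀ r, r ≤ N →
      (lqPAux N A B Q R S H ε r).IsSymm ∧
      (∀ (x : Fin n → ℝ) (u : ℕ → Fin m → ℝ),
        x ⬝ᵥ lqPAux N A B Q R S H ε r *ᵥ x ≤ ctg N A B Q R S H ε (N - r) x u) ∧
      (∀ (x : Fin n → ℝ) (u : ℕ → Fin m → ℝ),
        (∀ k, k < r → u k = lqKe N A B Q R S H ε (N - r + k) *ᵥ
          lqState (fun s => A (N - r + s)) (fun s => B (N - r + s)) x u k) →
        ctg N A B Q R S H ε (N - r) x u = x ⬝ᵥ lqPAux N A B Q R S H ε r *ᵥ x) := by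
  intro r
  induction r with
  | zero =>
      intro _
      have hNN : ∀ (x : Fin n → ℝ) (u : ℕ → Fin m → ℝ),
          ctg N A B Q R S H ε (N - 0) x u = x ⬝ᵥ H *ᵥ x := by
        intro x u
        unfold ctg
        rw [Nat.sub_zero, Nat.sub_self]
        simp only [range_zero, sum_empty, zero_add]
        rfl
      refine ⟨hH, fun x u => ?_, fun x u _ => hNN x u⟩
      · rw [hNN x u]; exact le_refl _
  | succ r ih =>
      intro hr1
      have hr : r ≤ N := by omega
      obtain ⟨hPsym, hlow, heq⟩ := ih hr
      have h1 : N - r = N - (r + 1) + 1 := by omega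
      have h2 : N - (N - (r + 1) + 1) = r := by omega
      have htN : N - (r + 1) < N := by omega
      rw [h1] at hlow heq
      -- the gain matrix at time N - (r+1) is expressed through lqPAux r
      have hPe : lqPe N A B Q R S H ε (N - (r + 1) + 1) = lqPAux N A B Q R S H ε r := by
        unfold lqPe; rw [h2]
      have hK : lqKe N A B Q R S H ε (N - (r + 1))
          = -((R (N - (r+1)) + (B (N - (r+1)))ᵀ * lqPAux N A B Q R S H ε r * B (N - (r+1))
              + ε • (1 : Matrix (Fin m) (Fin m) ℝ))⁻¹
            * ((B (N - (r+1)))ᵀ * lqPAux N A B Q R S H ε r * A (N - (r+1)) + S (N - (r+1)))) := by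
        unfold lqKe; rw [hPe]
      -- positive lower bound for M
      have hMlb : ∀ v : Fin m → ℝ, ε * (v ⬝ᵥ v)
          ≤ v ⬝ᵥ (R (N - (r+1)) + (B (N - (r+1)))ᵀ * lqPAux N A B Q R S H ε r * B (N - (r+1))
              + ε • (1 : Matrix (Fin m) (Fin m) ℝ)) *ᵥ v := by
        intro v
        set t := N - (r + 1) with htdef
        set uu : ℕ → Fin m → ℝ := fun s =>
          if s < t then 0 else if s = t then v else
            fbCtrl N A B Q R S H ε (t + 1) (B t *ᵥ v) (s - (t + 1)) with huu
        have hu_lt : ∀ s, s < t → uu s = 0 := by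
          intro s hs; simp only [huu]; rw [if_pos hs]
        have hu_t : uu t = v := by
          simp [huu]
        have hu_gt : (fun k => uu (t + (k + 1))) = fbCtrl N A B Q R S H ε (t + 1) (B t *ᵥ v) := by
          funext k
          simp only [huu]
          rw [if_neg (by omega), if_neg (by omega), show t + (k + 1) - (t + 1) = k by omega]
        have hz : ∀ s, s ≤ t → lqState A B 0 uu s = 0 := by
          intro s
          induction s with
          | zero => intro _; rfl
          | succ s ihs =>
              intro hs
              show A s *ᵥ lqState A B 0 uu s + B s *ᵥ uu s = 0
              rw [ihs (by omega), hu_lt s (by omega), Matrix.mulVec_zero,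
                Matrix.mulVec_zero, add_zero]
        have hspec := ctg_spec N A B Q R S H ε t (by omega) 0 uu
        have hsum0 : (∑ s ∈ range t,
            (lqState A B 0 uu s ⬝ᵥ Q s *ᵥ lqState A B 0 uu s
              + 2 * (uu s ⬝ᵥ S s *ᵥ lqState A B 0 uu s)
              + uu s ⬝ᵥ R s *ᵥ uu s + ε * (uu s ⬝ᵥ uu s))) = 0 := by
          apply Finset.sum_eq_zero
          intro s hs
          have hs' : s < t := Finset.mem_range.mp hs
          rw [hz s (by omega), hu_lt s hs']
          simp [Matrix.mulVec_zero, dotProduct_zero, zero_dotProduct]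
        rw [hsum0, zero_add, hz t le_rfl] at hspec
        have hsucc := ctg_succ N A B Q R S H ε t htN 0 (fun k => uu (t + k))
        rw [show t + 0 = t from rfl] at hsucc
        rw [hu_t] at hsucc
        have hshift : (fun k => (fun k' => uu (t + k')) (k + 1))
            = fbCtrl N A B Q R S H ε (t + 1) (B t *ᵥ v) := hu_gt
        rw [hshift] at hsucc
        simp only [Matrix.mulVec_zero, dotProduct_zero, zero_dotProduct, mul_zero,
          zero_add, add_zero] at hsucc
        have hfb := heq (B t *ᵥ v) (fbCtrl N A B Q R S H ε (t + 1) (B t *ᵥ v))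
          (fun k _ => fb_cond N A B Q R S H ε (t + 1) (B t *ᵥ v) k)
        rw [hfb] at hsucc
        -- now hspec : lqCostPert ... 0 uu = ctg t 0 (fun k => uu (t+k))
        -- hsucc : ctg t 0 ... = 0⬝Q0 + 2*(v⬝S0) + v⬝Rv + ε(v⬝v) + (Bv)⬝P(Bv)
        rw [hsucc] at hspec
        -- lower bound from hpos
        have hlb : ε * (v ⬝ᵥ v) ≤ lqCostPert N A B Q R S H ε 0 uu := by
          unfold lqCostPert
          have h01 := hpos uu
          have h02 : v ⬝ᵥ v ≤ ∑ s ∈ range N, uu s ⬝ᵥ uu s := by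
            rw [← hu_t]
            exact Finset.single_le_sum (f := fun s => uu s ⬝ᵥ uu s)
              (fun i _ => dp_self_nonneg _) (Finset.mem_range.mpr htN)
          nlinarith
        rw [hspec] at hlb
        have hBv : (B t *ᵥ v) ⬝ᵥ lqPAux N A B Q R S H ε r *ᵥ (B t *ᵥ v)
            = v ⬝ᵥ ((B t)ᵀ * lqPAux N A B Q R S H ε r * B t) *ᵥ v := by
          rw [dp_lmul]
          simp only [Matrix.mulVec_mulVec, ← Matrix.mul_assoc]
        rw [hBv] at hlb
        have hM : v ⬝ᵥ (R t + (B t)ᵀ * lqPAux N A B Q R S H ε r * B t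
            + ε • (1 : Matrix (Fin m) (Fin m) ℝ)) *ᵥ v
            = v ⬝ᵥ R t *ᵥ v + v ⬝ᵥ ((B t)ᵀ * lqPAux N A B Q R S H ε r * B t) *ᵥ v
              + ε * (v ⬝ᵥ v) := by
          rw [dp_pert, Matrix.add_mulVec, dotProduct_add]
        rw [hM]
        linarith
      -- apply the Riccati step
      obtain ⟨hPsym', hcs⟩ := riccati_step ε hε (A (N - (r+1))) (B (N - (r+1)))
        (Q (N - (r+1))) (R (N - (r+1))) (S (N - (r+1)))
        (lqPAux N A B Q R S H ε r) hPsym (hQ _) (hR _) hMlb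
      have hPdef : lqPAux N A B Q R S H ε (r + 1)
          = Q (N - (r+1)) + (A (N - (r+1)))ᵀ * lqPAux N A B Q R S H ε r * A (N - (r+1))
            - ((A (N - (r+1)))ᵀ * lqPAux N A B Q R S H ε r * B (N - (r+1)) + (S (N - (r+1)))ᵀ)
              * (R (N - (r+1)) + (B (N - (r+1)))ᵀ * lqPAux N A B Q R S H ε r * B (N - (r+1))
                  + ε • (1 : Matrix (Fin m) (Fin m) ℝ))⁻¹
              * ((B (N - (r+1)))ᵀ * lqPAux N A B Q R S H ε r * A (N - (r+1)) + S (N - (r+1))) := rfl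
      refine ⟨by rw [hPdef]; exact hPsym', ?_, ?_⟩
      · -- inequality
        intro x u
        have hst := ctg_succ N A B Q R S H ε (N - (r+1)) htN x u
        rw [hst]
        have hcs' := hcs x (u 0)
        have hlow' := hlow (A (N - (r+1)) *ᵥ x + B (N - (r+1)) *ᵥ u 0) (fun k => u (k + 1))
        have hwnn : (0:ℝ) ≤ (u 0 + ((R (N - (r+1)) + (B (N - (r+1)))ᵀ * lqPAux N A B Q R S H ε r
              * B (N - (r+1)) + ε • (1 : Matrix (Fin m) (Fin m) ℝ))⁻¹
              * ((B (N - (r+1)))ᵀ * lqPAux N A B Q R S H ε r * A (N - (r+1)) + S (N - (r+1)))) *ᵥ x) ⬝ᵥ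
            (R (N - (r+1)) + (B (N - (r+1)))ᵀ * lqPAux N A B Q R S H ε r * B (N - (r+1))
              + ε • (1 : Matrix (Fin m) (Fin m) ℝ)) *ᵥ
            (u 0 + ((R (N - (r+1)) + (B (N - (r+1)))ᵀ * lqPAux N A B Q R S H ε r * B (N - (r+1))
              + ε • (1 : Matrix (Fin m) (Fin m) ℝ))⁻¹
              * ((B (N - (r+1)))ᵀ * lqPAux N A B Q R S H ε r * A (N - (r+1)) + S (N - (r+1)))) *ᵥ x) := by
          have := hMlb (u 0 + ((R (N - (r+1)) + (B (N - (r+1)))ᵀ * lqPAux N A B Q R S H ε r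
              * B (N - (r+1)) + ε • (1 : Matrix (Fin m) (Fin m) ℝ))⁻¹
              * ((B (N - (r+1)))ᵀ * lqPAux N A B Q R S H ε r * A (N - (r+1)) + S (N - (r+1)))) *ᵥ x)
          nlinarith [dp_self_nonneg (u 0 + ((R (N - (r+1)) + (B (N - (r+1)))ᵀ
            * lqPAux N A B Q R S H ε r * B (N - (r+1)) + ε • (1 : Matrix (Fin m) (Fin m) ℝ))⁻¹
            * ((B (N - (r+1)))ᵀ * lqPAux N A B Q R S H ε r * A (N - (r+1)) + S (N - (r+1)))) *ᵥ x)]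
        rw [hPdef]
        linarith
      · -- equality
        intro x u hcond
        have hst := ctg_succ N A B Q R S H ε (N - (r+1)) htN x u
        rw [hst]
        have hu0 : u 0 = lqKe N A B Q R S H ε (N - (r+1)) *ᵥ x := by
          have := hcond 0 (by omega)
          rw [show N - (r+1) + 0 = N - (r+1) from rfl] at this
          exact this
        have hcond' : ∀ k, k < r → (fun k => u (k + 1)) k
            = lqKe N A B Q R S H ε (N - (r+1) + 1 + k) *ᵥ
              lqState (fun s => A (N - (r+1) + 1 + s)) (fun s => B (N - (r+1) + 1 + s))
                (A (N - (r+1)) *ᵥ x + B (N - (r+1)) *ᵥ u 0) (fun k => u (k + 1)) k := by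
          intro k hk
          have hc := hcond (k + 1) (by omega)
          rw [lqState_shift A B (N - (r+1)) x u k] at hc
          rw [show N - (r+1) + (k + 1) = N - (r+1) + 1 + k by omega] at hc
          exact hc
        have heq' := heq (A (N - (r+1)) *ᵥ x + B (N - (r+1)) *ᵥ u 0) (fun k => u (k + 1)) hcond'
        rw [heq']
        have hcs' := hcs x (u 0)
        have hw0 : u 0 + ((R (N - (r+1)) + (B (N - (r+1)))ᵀ * lqPAux N A B Q R S H ε r
              * B (N - (r+1)) + ε • (1 : Matrix (Fin m) (Fin m) ℝ))⁻¹
              * ((B (N - (r+1)))ᵀ * lqPAux N A B Q R S H ε r * A (N - (r+1)) + S (N - (r+1)))) *ᵥ x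
            = 0 := by
          rw [hu0, hK, Matrix.neg_mulVec, neg_add_cancel]
        rw [hw0] at hcs'
        rw [zero_dotProduct] at hcs'
        rw [hPdef]
        linarith

/-- inequality (23), Theorem 4 (1) ⇒ (2): if `ū` is open-loop optimal for
`x₀`, then `ε Σ|u^ε_t|² ≤ V_ε(x₀) − V(x₀) ≤ ε Σ|ū_t|²`, so `Σ|u^ε_t|² ≤ Σ|ū_t|²` and the
family `{u^ε}` is bounded. -/
theorem stmt_10 {n m : ℕ} (hn : 0 < n) (hm : 0 < m) (N : ℕ) (hN : 0 < N)
    (A : ℕ → Matrix (Fin n) (Fin n) ℝ) (B : ℕ → Matrix (Fin n) (Fin m) ℝ)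
    (Q : ℕ → Matrix (Fin n) (Fin n) ℝ) (R : ℕ → Matrix (Fin m) (Fin m) ℝ)
    (S : ℕ → Matrix (Fin m) (Fin n) ℝ) (H : Matrix (Fin n) (Fin n) ℝ)
    (hQ : ∀ t, (Q t).IsSymm) (hR : ∀ t, (R t).IsSymm) (hH : H.IsSymm)
    (hpos : ∀ u : ℕ → Fin m → ℝ, 0 ≤ lqCost N A B Q R S H 0 u)
    (x₀ : Fin n → ℝ) (ubar : ℕ → Fin m → ℝ)
    (hopt : ∀ u : ℕ → Fin m → ℝ,
      lqCost N A B Q R S H x₀ ubar ≤ lqCost N A B Q R S H x₀ u) :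
    ∀ ε : ℝ, 0 < ε →
      (ε * ∑ t ∈ range N, lqUe N A B Q R S H ε x₀ t ⬝ᵥ lqUe N A B Q R S H ε x₀ t
          ≤ sInf (Set.range fun u : ℕ → Fin m → ℝ => lqCostPert N A B Q R S H ε x₀ u)
            - sInf (Set.range fun u : ℕ → Fin m → ℝ => lqCost N A B Q R S H x₀ u)) ∧
      (sInf (Set.range fun u : ℕ → Fin m → ℝ => lqCostPert N A B Q R S H ε x₀ u)
          - sInf (Set.range fun u : ℕ → Fin m → ℝ => lqCost N A B Q R S H x₀ u)
        ≤ ε * ∑ t ∈ range N, ubar t ⬝ᵥ ubar t) ∧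
      (∑ t ∈ range N, lqUe N A B Q R S H ε x₀ t ⬝ᵥ lqUe N A B Q R S H ε x₀ t
        ≤ ∑ t ∈ range N, ubar t ⬝ᵥ ubar t) := by
  intro ε hε
  obtain ⟨_, hlowN, heqN⟩ := lq_main N A B Q R S H ε hε hQ hR hH hpos N le_rfl
  simp only [Nat.sub_self, Nat.zero_add] at hlowN heqN
  have hstate : ∀ k, lqState A B x₀ (lqUe N A B Q R S H ε x₀) k
      = clState A B (lqKe N A B Q R S H ε) (fun _ => 0) x₀ k := by
    intro k
    induction k with
    | zero => rfl
    | succ k ihk =>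
        show A k *ᵥ lqState A B x₀ (lqUe N A B Q R S H ε x₀) k
            + B k *ᵥ lqUe N A B Q R S H ε x₀ k
          = (A k + B k * lqKe N A B Q R S H ε k) *ᵥ
              clState A B (lqKe N A B Q R S H ε) (fun _ => 0) x₀ k + B k *ᵥ 0
        rw [ihk, Matrix.mulVec_zero, add_zero, Matrix.add_mulVec, ← Matrix.mulVec_mulVec]
        rfl
  have hcondN : ∀ k, k < N → lqUe N A B Q R S H ε x₀ k
      = lqKe N A B Q R S H ε k *ᵥ lqState A B x₀ (lqUe N A B Q R S H ε x₀) k := by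
    intro k _
    rw [hstate k]
    rfl
  have hueq : lqCostPert N A B Q R S H ε x₀ (lqUe N A B Q R S H ε x₀)
      = x₀ ⬝ᵥ lqPAux N A B Q R S H ε N *ᵥ x₀ := by
    rw [← ctg_zero N A B Q R S H ε x₀ (lqUe N A B Q R S H ε x₀)]
    exact heqN x₀ _ hcondN
  have hub : ∀ u : ℕ → Fin m → ℝ,
      lqCostPert N A B Q R S H ε x₀ (lqUe N A B Q R S H ε x₀)
        ≤ lqCostPert N A B Q R S H ε x₀ u := by
    intro u
    rw [hueq, ← ctg_zero N A B Q R S H ε x₀ u]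
    exact hlowN x₀ u
  have hVe : sInf (Set.range fun u : ℕ → Fin m → ℝ => lqCostPert N A B Q R S H ε x₀ u)
      = lqCostPert N A B Q R S H ε x₀ (lqUe N A B Q R S H ε x₀) :=
    IsLeast.csInf_eq ⟨⟨lqUe N A B Q R S H ε x₀, rfl⟩, by rintro y ⟨u, rfl⟩; exact hub u⟩
  have hV : sInf (Set.range fun u : ℕ → Fin m → ℝ => lqCost N A B Q R S H x₀ u)
      = lqCost N A B Q R S H x₀ ubar :=
    IsLeast.csInf_eq ⟨⟨ubar, rfl⟩, by rintro y ⟨u, rfl⟩; exact hopt u⟩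
  rw [hVe, hV]
  have hdef1 : lqCostPert N A B Q R S H ε x₀ (lqUe N A B Q R S H ε x₀)
      = lqCost N A B Q R S H x₀ (lqUe N A B Q R S H ε x₀)
        + ε * ∑ t ∈ range N, lqUe N A B Q R S H ε x₀ t ⬝ᵥ lqUe N A B Q R S H ε x₀ t := rfl
  have hdef2 : lqCostPert N A B Q R S H ε x₀ ubar
      = lqCost N A B Q R S H x₀ ubar + ε * ∑ t ∈ range N, ubar t ⬝ᵥ ubar t := rfl
  have h3 : lqCost N A B Q R S H x₀ ubar ≤ lqCost N A B Q R S H x₀ (lqUe N A B Q R S H ε x₀) :=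
    hopt _
  have h4 := hub ubar
  refine ⟨by linarith, by linarith, ?_⟩
  have h5 : ε * ∑ t ∈ range N, lqUe N A B Q R S H ε x₀ t ⬝ᵥ lqUe N A B Q R S H ε x₀ t
      ≤ ε * ∑ t ∈ range N, ubar t ⬝ᵥ ubar t := by linarith
  exact le_of_mul_le_mul_left h5 hε
end
end
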